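/- arXiv:1510.04899 — 2 statements merged into one kernel-verified Lean document; each statement's English description precedes it below -/
import Mathlib

section
/- Fix real constants λ and μ̄, and define J : ℝ × ℝ → ℝ by J(ξ, Π) = e^{μ̄²ξ}·(Π² − λ·Π) + (λ²/4)·(e^{μ̄²ξ} − 1). Then: (i) J(0, Π) = Π² − λ·Π for all Π; (ii) ∂²J/∂Π²(ξ, Π) = 2·e^{μ̄²ξ} > 0 for all ξ, Π; and (iii) J satisfies the nonlinear PDE ∂J/∂ξ(ξ, Π) = (1/2)·μ̄² · (∂J/∂Π(ξ, Π))² / (∂²J/∂Π²(ξ, Π)) for all ξ, Π. -/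
/-!
With `e = exp (μ̄² ξ)`, `J` is a quadratic in `Π`, so `J_Π = e (2Π − λ)` and `J_ΠΠ = 2e > 0`,
while `J_ξ = μ̄² e (Π² − λΠ + λ²/4) = μ̄² e (Π − λ/2)²`: the constant `λ²/4` is exactly what
completes the square, making `J_ξ` equal to `(1/2) μ̄² e² (2Π − λ)² / (2e) = (1/2) μ̄² J_Π² / J_ΠΠ`.
-/

open Real

lemma hasDerivAt_quadratic (a b c x : ℝ) :
    HasDerivAt (fun x => a * (x ^ 2 - b * x) + c) (a * (2 * x - b)) x :=
  ((((hasDerivAt_pow 2 x).sub ((hasDerivAt_id' x).const_mul b)).const_mul a).add_const c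
    ).congr_deriv (by ring)

lemma deriv_quadratic (a b c : ℝ) :
    deriv (fun x => a * (x ^ 2 - b * x) + c) = fun x => a * (2 * x - b) :=
  funext fun x => (hasDerivAt_quadratic a b c x).deriv

lemma deriv_deriv_quadratic (a b c x : ℝ) :
    deriv (deriv (fun x => a * (x ^ 2 - b * x) + c)) x = 2 * a := by
  have h := (((hasDerivAt_id' x).const_mul 2).sub_const b).const_mul a
  rw [deriv_quadratic, h.deriv]
  ring

lemma hasDerivAt_exp_mul_affine (k A B t : ℝ) :
    HasDerivAt (fun t => exp (k * t) * A + B * (exp (k * t) - 1))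
      (k * exp (k * t) * (A + B)) t := by
  have he : HasDerivAt (fun t => exp (k * t)) (exp (k * t) * k) t := by
    simpa using ((hasDerivAt_id' t).const_mul k).exp
  exact ((he.mul_const A).add ((he.sub_const 1).const_mul B)).congr_deriv (by ring)

/-- The explicit quadratic-in-`Π` solution of Lipton's nonlinear PDE
`J_ξ = (1/2)·μ̄²·J_Π²/J_ΠΠ` with initial condition `J(0,Π) = Π² − λΠ`.
Here the second argument of `J` plays the role of the wealth `Π`. -/
theorem lipton_explicit_solution
    (lam μbar : ℝ) (J : ℝ → ℝ → ℝ)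
    (hJ : ∀ ξ P : ℝ, J ξ P =
      Real.exp (μbar ^ 2 * ξ) * (P ^ 2 - lam * P) +
      (lam ^ 2 / 4) * (Real.exp (μbar ^ 2 * ξ) - 1)) :
    (∀ P : ℝ, J 0 P = P ^ 2 - lam * P) ∧
    (∀ ξ P : ℝ, deriv (deriv (fun P' => J ξ P')) P = 2 * Real.exp (μbar ^ 2 * ξ) ∧
      0 < deriv (deriv (fun P' => J ξ P')) P) ∧
    (∀ ξ P : ℝ, deriv (fun ξ' => J ξ' P) ξ =
      (1 / 2) * μbar ^ 2 * (deriv (fun P' => J ξ P') P) ^ 2 /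
        deriv (deriv (fun P' => J ξ P')) P) := by
  have hJ_wealth (ξ : ℝ) : (fun P' => J ξ P') = fun P' =>
      exp (μbar ^ 2 * ξ) * (P' ^ 2 - lam * P') + lam ^ 2 / 4 * (exp (μbar ^ 2 * ξ) - 1) :=
    funext (hJ ξ)
  have hJ_time (P : ℝ) : (fun ξ' => J ξ' P) = fun ξ' =>
      exp (μbar ^ 2 * ξ') * (P ^ 2 - lam * P) + lam ^ 2 / 4 * (exp (μbar ^ 2 * ξ') - 1) :=
    funext fun ξ' => hJ ξ' P
  have hJPP (ξ P : ℝ) : deriv (deriv (fun P' => J ξ P')) P = 2 * exp (μbar ^ 2 * ξ) := by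
    rw [hJ_wealth, deriv_deriv_quadratic]
  refine ⟨fun P => by simp [hJ], fun ξ P => ⟨hJPP ξ P, by rw [hJPP]; positivity⟩, fun ξ P => ?_⟩
  rw [hJ_time, (hasDerivAt_exp_mul_affine _ _ _ ξ).deriv, hJPP, hJ_wealth, deriv_quadratic]
  field_simp
  ring
end

section
/- Let σ > 0 and K > 0. Define N(z) = ∫_{−∞}^{z} e^{−u²/2}/√(2π) du, d₁(S,τ) = (log(S/K) + σ²τ/2)/(σ√τ), d₂(S,τ) = d₁(S,τ) − σ√τ, and c_BS(S,τ) = S·N(d₁(S,τ)) − K·N(d₂(S,τ)) for S, τ > 0. For x ∈ (−K, 0) and τ > 0 set y = −x, z = −K²/x, and define c(x,τ) = y − c_BS(y,τ) − K·N(d₁(y,τ)) − (y/K)·( z − c_BS(z,τ) − K·N(d₁(z,τ)) ). Then for each fixed τ > 0, c(x,τ) → 0 as x → 0 from the left. -/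
/-! Write `y = -x → 0⁺` and `z = K² / y → +∞`. The direct part `y - c_BS(y) - K N(d₁ y)` vanishes
because `d₁, d₂ → -∞` as `y → 0⁺`. In the reflected part `y / K = K / z`, and
`K / z · (z - c_BS(z) - K N(d₁ z)) = K (1 - N(d₁ z)) - K² / z · (N(d₁ z) - N(d₂ z))`,
which vanishes because `d₁, d₂ → +∞` as `z → +∞`: the growth of `z` is cancelled before any
limit is taken. -/

open MeasureTheory Filter Real Topology ProbabilityTheory

lemma cdf_gaussianReal_eq_integral (μ : ℝ) {v : NNReal} (hv : v ≠ 0) (z : ℝ) :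
    cdf (gaussianReal μ v) z = ∫ u in Set.Iic z, gaussianPDFReal μ v u := by
  rw [cdf_eq_real, measureReal_def, gaussianReal_apply_eq_integral _ hv,
    ENNReal.toReal_ofReal (integral_nonneg fun u => gaussianPDFReal_nonneg _ _ _)]

lemma gaussianPDFReal_zero_one (u : ℝ) :
    gaussianPDFReal 0 1 u = exp (-u ^ 2 / 2) / √(2 * π) := by
  simp [gaussianPDFReal, div_eq_inv_mul, mul_comm]

section LogMoneyness

variable {K b : ℝ} (hK : 0 < K) (hb : 0 < b) (a : ℝ)
include hK hb

lemma tendsto_log_div_add_div_atTop :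
    Tendsto (fun S => (log (S / K) + a) / b) atTop atTop :=
  (tendsto_atTop_add_const_right _ a
    (tendsto_log_atTop.comp (tendsto_id.atTop_div_const hK))).atTop_div_const hb

lemma tendsto_log_div_add_div_nhdsGT_zero :
    Tendsto (fun S => (log (S / K) + a) / b) (𝓝[>] 0) atBot := by
  have hSK : Tendsto (fun S : ℝ => S / K) (𝓝[>] 0) (𝓝[>] 0) :=
    tendsto_nhdsWithin_iff.2
      ⟨((continuous_id.div_const K).tendsto' 0 0 (zero_div K)).mono_left nhdsWithin_le_nhds,
        eventually_mem_nhdsWithin.mono fun S hS => div_pos hS hK⟩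
  exact (tendsto_atBot_add_const_right _ a (tendsto_log_nhdsGT_zero.comp hSK)).atBot_div_const hb

end LogMoneyness

section CallPrice

variable {K q : ℝ} {P₁ P₂ C : ℝ → ℝ} (hC : ∀ S, C S = S * P₁ S - K * P₂ S)
include hC

lemma tendsto_sub_call_sub_nhdsGT_zero (h₁ : Tendsto P₁ (𝓝[>] 0) (𝓝 0))
    (h₂ : Tendsto P₂ (𝓝[>] 0) (𝓝 0)) :
    Tendsto (fun y => y - C y - K * P₁ y) (𝓝[>] 0) (𝓝 0) := by
  have hy : Tendsto (fun y : ℝ => y) (𝓝[>] 0) (𝓝 0) := nhdsWithin_le_nhds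
  simp only [hC]
  simpa using (hy.sub ((hy.mul h₁).sub (h₂.const_mul K))).sub (h₁.const_mul K)

lemma tendsto_div_mul_sub_call_sub_atTop (h₁ : Tendsto P₁ atTop (𝓝 1))
    (h₂ : Tendsto P₂ atTop (𝓝 q)) :
    Tendsto (fun z => K / z * (z - C z - K * P₁ z)) atTop (𝓝 0) := by
  have hrw : ∀ᶠ z in atTop,
      K * (1 - P₁ z) - K ^ 2 / z * (P₁ z - P₂ z) = K / z * (z - C z - K * P₁ z) :=
    (eventually_ne_atTop 0).mono fun z hz => by rw [hC]; field_simp; ring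
  refine Tendsto.congr' hrw ?_
  simpa using (((tendsto_const_nhds (x := (1 : ℝ))).sub h₁).const_mul K).sub
    (((tendsto_const_nhds (x := K ^ 2)).div_atTop tendsto_id).mul (h₁.sub h₂))

lemma tendsto_barrier_call_nhdsGT_zero (hK : K ≠ 0)
    (h₁ : Tendsto P₁ (𝓝[>] 0) (𝓝 0)) (h₂ : Tendsto P₂ (𝓝[>] 0) (𝓝 0))
    (h₁' : Tendsto P₁ atTop (𝓝 1)) (h₂' : Tendsto P₂ atTop (𝓝 q)) :
    Tendsto (fun y => y - C y - K * P₁ y - y / K * (K ^ 2 / y - C (K ^ 2 / y) - K * P₁ (K ^ 2 / y)))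
      (𝓝[>] 0) (𝓝 0) := by
  have hz : Tendsto (fun y => K ^ 2 / y) (𝓝[>] 0) atTop := by
    simpa only [div_eq_mul_inv] using
      tendsto_inv_nhdsGT_zero.const_mul_atTop (by positivity : 0 < K ^ 2)
  have hrw : ∀ᶠ y in 𝓝[>] (0 : ℝ), K / (K ^ 2 / y) = y / K :=
    eventually_mem_nhdsWithin.mono fun y (hy : 0 < y) => by field_simp
  simpa using (tendsto_sub_call_sub_nhdsGT_zero hC h₁ h₂).sub
    (((tendsto_div_mul_sub_call_sub_atTop hC h₁' h₂').comp hz).congr' (hrw.mono fun y hy => by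
      simp only [Function.comp, hy]))

end CallPrice

/-- The closed-form up-and-out call price from the displaced lognormal example
tends to `0` as `x → 0⁻` (through the domain `(−K, 0)`), for each fixed `τ > 0`. -/
theorem barrier_call_limit_at_zero
    (σ K : ℝ) (hσ : 0 < σ) (hK : 0 < K)
    (N : ℝ → ℝ)
    (hN : ∀ z : ℝ, N z = ∫ u in Set.Iic z, Real.exp (-u ^ 2 / 2) / Real.sqrt (2 * Real.pi))
    (d₁ d₂ cBS : ℝ → ℝ → ℝ)
    (hd₁ : ∀ S τ : ℝ, d₁ S τ = (Real.log (S / K) + σ ^ 2 * τ / 2) / (σ * Real.sqrt τ))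
    (hd₂ : ∀ S τ : ℝ, d₂ S τ = d₁ S τ - σ * Real.sqrt τ)
    (hcBS : ∀ S τ : ℝ, cBS S τ = S * N (d₁ S τ) - K * N (d₂ S τ))
    (c : ℝ → ℝ → ℝ)
    (hc : ∀ x ∈ Set.Ioo (-K) (0 : ℝ), ∀ τ : ℝ, 0 < τ →
      c x τ = (-x) - cBS (-x) τ - K * N (d₁ (-x) τ) -
        ((-x) / K) * ((-K ^ 2 / x) - cBS (-K ^ 2 / x) τ - K * N (d₁ (-K ^ 2 / x) τ))) :
    ∀ τ : ℝ, 0 < τ →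
      Tendsto (fun x => c x τ) (nhdsWithin 0 (Set.Ioo (-K) 0)) (nhds 0) := by
  intro τ hτ
  have hNcdf : N = cdf (gaussianReal 0 1) := funext fun z => by
    rw [hN, cdf_gaussianReal_eq_integral 0 one_ne_zero]
    simp only [gaussianPDFReal_zero_one]
  have hN_bot : Tendsto N atBot (𝓝 0) := hNcdf ▸ tendsto_cdf_atBot _
  have hN_top : Tendsto N atTop (𝓝 1) := hNcdf ▸ tendsto_cdf_atTop _
  have hb : 0 < σ * √τ := mul_pos hσ (sqrt_pos.2 hτ)
  have hd₁_zero : Tendsto (fun S => d₁ S τ) (𝓝[>] 0) atBot := by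
    simpa only [hd₁] using tendsto_log_div_add_div_nhdsGT_zero hK hb (σ ^ 2 * τ / 2)
  have hd₁_top : Tendsto (fun S => d₁ S τ) atTop atTop := by
    simpa only [hd₁] using tendsto_log_div_add_div_atTop hK hb (σ ^ 2 * τ / 2)
  have hd₂_zero : Tendsto (fun S => d₂ S τ) (𝓝[>] 0) atBot := by
    simpa only [hd₂, sub_eq_add_neg] using tendsto_atBot_add_const_right _ _ hd₁_zero
  have hd₂_top : Tendsto (fun S => d₂ S τ) atTop atTop := by
    simpa only [hd₂, sub_eq_add_neg] using tendsto_atTop_add_const_right _ _ hd₁_top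
  have hlim := tendsto_barrier_call_nhdsGT_zero (C := fun S => cBS S τ) (fun S => hcBS S τ)
    hK.ne' (hN_bot.comp hd₁_zero) (hN_bot.comp hd₂_zero) (hN_top.comp hd₁_top)
    (hN_top.comp hd₂_top)
  have hneg : Tendsto Neg.neg (𝓝[Set.Ioo (-K) 0] (0 : ℝ)) (𝓝[>] 0) := by
    simpa using (tendsto_neg_nhdsLT (a := (0 : ℝ))).mono_left
      (nhdsWithin_mono _ Set.Ioo_subset_Iio_self)
  refine (hlim.comp hneg).congr' (eventually_mem_nhdsWithin.mono fun x hx => ?_)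
  simp only [hc x hx τ hτ, Function.comp, neg_div, div_neg]
end
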